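/- Clopper–Pearson validity: if K ∼ Binomial(n, p) and p̲ = LowerConfBound(K, n, 1−α) is defined as the infimum over q such that the probability that Binomial(n, q) ≥ K is at least α (equivalently via the Beta quantile), then P(p̲ ≤ p) ≥ 1 − α. -/

import Mathlib

open MeasureTheory ProbabilityTheory Set

/-!
Let `k₀` be the least `k` with `P_p(Binomial ≥ k) < α` (it exists because the tail vanishes
beyond `n`). Whenever `K < k₀`, the true parameter `p` belongs to the set whose infimum defines
the lower limit, so the limit is at most `p`. Hence the lower limit can exceed `p` only on
`{K ≥ k₀}`, whose probability is at most the binomial tail at `k₀`, which is below `α`.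
-/

/-- Upper tail of the binomial distribution: `P(Binomial(n, q) ≥ k)`. -/
noncomputable def binomTail (n k : ℕ) (q : ℝ) : ℝ :=
  ∑ j ∈ Finset.Icc k n, (n.choose j : ℝ) * q ^ j * (1 - q) ^ (n - j)

/-- The one-sided Clopper–Pearson lower confidence limit for a binomial success probability:
the infimum over `q ∈ [0,1]` such that `P(Binomial(n, q) ≥ k) ≥ α`. -/
noncomputable def clopperPearsonLower (k n : ℕ) (α : ℝ) : ℝ :=
  sInf {q : ℝ | q ∈ Set.Icc (0 : ℝ) 1 ∧ α ≤ binomTail n k q}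

lemma binomTail_eq_zero_of_lt {n k : ℕ} (h : n < k) (q : ℝ) : binomTail n k q = 0 := by
  rw [binomTail, Finset.Icc_eq_empty (by omega), Finset.sum_empty]

lemma clopperPearsonLower_le_of_le_binomTail {k n : ℕ} {α p : ℝ} (hp : p ∈ Icc (0 : ℝ) 1)
    (h : α ≤ binomTail n k p) : clopperPearsonLower k n α ≤ p :=
  csInf_le ⟨0, fun _ hq => hq.1.1⟩ ⟨hp, h⟩

lemma measure_tail_le_ofReal_binomTail {Ω : Type*} [MeasurableSpace Ω] (μ : Measure Ω)
    {n : ℕ} {p : ℝ} (hp : p ∈ Icc (0 : ℝ) 1) {K : Ω → ℕ}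
    (hK : ∀ k : ℕ, μ {ω | K ω = k} =
      ENNReal.ofReal ((n.choose k : ℝ) * p ^ k * (1 - p) ^ (n - k)))
    (k₀ : ℕ) : μ {ω | k₀ ≤ K ω} ≤ ENNReal.ofReal (binomTail n k₀ p) := by
  have hbeyond : μ {ω | n < K ω} = 0 := by
    refine measure_mono_null (fun ω (hω : n < K ω) => ?_)
      (measure_iUnion_null fun j => (hK (n + 1 + j)).trans ?_)
    · exact mem_iUnion.2 ⟨K ω - (n + 1), show K ω = _ by omega⟩
    · rw [Nat.choose_eq_zero_of_lt (by omega), Nat.cast_zero, zero_mul, zero_mul,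
        ENNReal.ofReal_zero]
  have hcover : {ω | k₀ ≤ K ω} ⊆ (⋃ k ∈ Finset.Icc k₀ n, {ω | K ω = k}) ∪ {ω | n < K ω} := by
    intro ω (hω : k₀ ≤ K ω)
    rcases le_or_gt (K ω) n with hle | hgt
    · exact Or.inl (mem_biUnion (Finset.mem_Icc.2 ⟨hω, hle⟩) rfl)
    · exact Or.inr hgt
  have hterm_nonneg : ∀ k ∈ Finset.Icc k₀ n,
      0 ≤ (n.choose k : ℝ) * p ^ k * (1 - p) ^ (n - k) := fun k _ => by
    have := hp.1; have := hp.2; positivity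
  calc μ {ω | k₀ ≤ K ω}
      ≤ μ (⋃ k ∈ Finset.Icc k₀ n, {ω | K ω = k}) + μ {ω | n < K ω} :=
        (measure_mono hcover).trans (measure_union_le _ _)
    _ ≤ ∑ k ∈ Finset.Icc k₀ n, μ {ω | K ω = k} := by
        rw [hbeyond, add_zero]; exact measure_biUnion_finset_le _ _
    _ = ENNReal.ofReal (binomTail n k₀ p) := by
        simp only [hK, binomTail, ENNReal.ofReal_sum_of_nonneg hterm_nonneg]

lemma ofReal_one_sub_le_measure_of_measure_compl_le {Ω : Type*} [MeasurableSpace Ω]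
    {μ : Measure Ω} [IsProbabilityMeasure μ] {s : Set Ω} {α : ℝ} (hα : 0 ≤ α)
    (h : μ sᶜ ≤ ENNReal.ofReal α) : ENNReal.ofReal (1 - α) ≤ μ s :=
  calc ENNReal.ofReal (1 - α) = μ univ - ENNReal.ofReal α := by
        rw [ENNReal.ofReal_sub 1 hα, ENNReal.ofReal_one, measure_univ]
    _ ≤ μ univ - μ sᶜ := tsub_le_tsub_left h _
    _ ≤ μ (univ \ sᶜ) := le_measure_sdiff
    _ = μ s := by rw [← compl_eq_univ_sdiff, compl_compl]

theorem clopperPearson_validity_general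
    {Ω : Type*} [MeasureSpace Ω] [IsProbabilityMeasure (ℙ : Measure Ω)]
    (n : ℕ) (p : ℝ) (hp : p ∈ Set.Icc (0 : ℝ) 1)
    (α : ℝ) (hα : α ∈ Set.Ioo (0 : ℝ) 1)
    (K : Ω → ℕ)
    (hK : ∀ k : ℕ, ℙ {ω | K ω = k} =
      ENNReal.ofReal ((n.choose k : ℝ) * p ^ k * (1 - p) ^ (n - k))) :
    ENNReal.ofReal (1 - α) ≤ ℙ {ω | clopperPearsonLower (K ω) n α ≤ p} := by
  classical
  have hex : ∃ k, binomTail n k p < α :=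
    ⟨n + 1, by rw [binomTail_eq_zero_of_lt n.lt_succ_self]; exact hα.1⟩
  have hfail : {ω | clopperPearsonLower (K ω) n α ≤ p}ᶜ ⊆ {ω | Nat.find hex ≤ K ω} := by
    intro ω hω
    by_contra hlt
    exact hω (clopperPearsonLower_le_of_le_binomTail hp
      (not_lt.1 (Nat.find_min hex (not_le.1 hlt))))
  refine ofReal_one_sub_le_measure_of_measure_compl_le hα.1.le ?_
  calc ℙ {ω | clopperPearsonLower (K ω) n α ≤ p}ᶜ
      ≤ ℙ {ω | Nat.find hex ≤ K ω} := measure_mono hfail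
    _ ≤ ENNReal.ofReal (binomTail n (Nat.find hex) p) := measure_tail_le_ofReal_binomTail ℙ hp hK _
    _ ≤ ENNReal.ofReal α := ENNReal.ofReal_le_ofReal (Nat.find_spec hex).le

/-- Clopper–Pearson validity: if `K ∼ Binomial(n, p)` and
`p̲ = LowerConfBound(K, n, 1−α)` is the Clopper–Pearson lower confidence limit, then
`P(p̲ ≤ p) ≥ 1 − α`. -/
theorem clopperPearson_validity
    {Ω : Type*} [MeasureSpace Ω] [IsProbabilityMeasure (ℙ : Measure Ω)]
    (n : ℕ) (p : ℝ) (hp : p ∈ Set.Icc (0 : ℝ) 1)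
    (α : ℝ) (hα : α ∈ Set.Ioo (0 : ℝ) 1)
    (K : Ω → ℕ) (hKmeas : Measurable K)
    (hK : ∀ k : ℕ, ℙ {ω | K ω = k} =
      ENNReal.ofReal ((n.choose k : ℝ) * p ^ k * (1 - p) ^ (n - k))) :
    ENNReal.ofReal (1 - α) ≤ ℙ {ω | clopperPearsonLower (K ω) n α ≤ p} :=
  clopperPearson_validity_general n p hp α hα K hK
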